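/- Let ν be a symmetric Lévy measure on ℝⁿ whose support is unbounded (i.e. ν({y : |y| > R}) > 0 for every R > 0), and let Ω ⊆ ℝⁿ be a nonempty bounded open set. For ε > 0 let Ω_ε = {x ∈ ℝⁿ : dist(x, Ω) < ε} and set C⁻¹ = lim_{ε→0⁺} inf_{x∈Ω} ν((ℝⁿ∖Ω_ε) − x) (the limit of a monotone bounded family, and C⁻¹ > 0). Then for every f ∈ L^∞(Ω), g ∈ L^∞(ℝⁿ∖Ω), and every weak solution u of Lu = f in Ω, u = g on ℝⁿ∖Ω, one has u ≤ C‖f‖_{L^∞(Ω)} + ‖g‖_{L^∞(ℝⁿ∖Ω)} a.e. -/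

import Mathlib

open MeasureTheory Filter Set Topology
open scoped ENNReal Topology Pointwise Classical

noncomputable section

abbrev Eucl (n : ℕ) : Type := EuclideanSpace ℝ (Fin n)

/-- A symmetric Lévy measure on ℝⁿ: ν({0}) = 0, ν(−A) = ν(A) for Borel A, and
∫ min(1,|y|²) dν < ∞. -/
def IsSymmLevy {n : ℕ} (ν : Measure (Eucl n)) : Prop :=
  ν {0} = 0 ∧ (∀ A : Set (Eucl n), MeasurableSet A → ν (-A) = ν A) ∧
    (∫⁻ y, ENNReal.ofReal (min 1 (‖y‖ ^ 2)) ∂ν) < ⊤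

/-- The truncated nonlocal operator: ∫_{|y| ≥ ε} (u(x) − u(x+y)) dν(y). -/
def truncL {n : ℕ} (ν : Measure (Eucl n)) (u : Eucl n → ℝ) (x : Eucl n) (ε : ℝ) : ℝ :=
  ∫ y in {y : Eucl n | ε ≤ ‖y‖}, (u x - u (x + y)) ∂ν

/-- `Lu(x)` is well defined with value `l`: the integrands are ν-integrable away from the
origin, and the principal value limit exists and equals `l`. -/
def HasLAt {n : ℕ} (ν : Measure (Eucl n)) (u : Eucl n → ℝ) (x : Eucl n) (l : ℝ) : Prop :=
  (∀ ε : ℝ, 0 < ε → IntegrableOn (fun y => u x - u (x + y)) {y : Eucl n | ε ≤ ‖y‖} ν) ∧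
  Tendsto (truncL ν u x) (𝓝[>] (0:ℝ)) (𝓝 l)

/-- Squared norm of the generalized Sobolev space V_ν^D(ℝⁿ). -/
def sobSq {n : ℕ} (ν : Measure (Eucl n)) (D : Set (Eucl n)) (u : Eucl n → ℝ) : ℝ≥0∞ :=
  (∫⁻ x in D, ENNReal.ofReal (u x ^ 2)) +
    (1/2) * ∫⁻ y in D, ∫⁻ z, ENNReal.ofReal ((u y - u (y + z)) ^ 2) ∂ν

/-- Membership in V_ν^D(ℝⁿ). -/
def MemV {n : ℕ} (ν : Measure (Eucl n)) (D : Set (Eucl n)) (u : Eucl n → ℝ) : Prop :=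
  Measurable u ∧ sobSq ν D u < ⊤

/-- Membership in H_ν^D(ℝⁿ): members of V_ν^D vanishing a.e. outside D. -/
def MemH {n : ℕ} (ν : Measure (Eucl n)) (D : Set (Eucl n)) (u : Eucl n → ℝ) : Prop :=
  MemV ν D u ∧ ∀ᵐ x ∂(volume : Measure (Eucl n)), x ∉ D → u x = 0

/-- The quadratic form ⟨u,u⟩_ν (with values in [0,∞]). -/
def formQ {n : ℕ} (ν : Measure (Eucl n)) (u : Eucl n → ℝ) : ℝ≥0∞ :=
  (1/2) * ∫⁻ y, ∫⁻ z, ENNReal.ofReal ((u y - u (y + z)) ^ 2) ∂ν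

/-- The bilinear form ⟨u,v⟩_ν. -/
def formB {n : ℕ} (ν : Measure (Eucl n)) (u v : Eucl n → ℝ) : ℝ :=
  (1/2) * ∫ y, (∫ z, (u y - u (y + z)) * (v y - v (y + z)) ∂ν)

/-- Weak solution of Lu = f in Ω, u = g on ℝⁿ∖Ω. -/
def IsWeakSol {n : ℕ} (ν : Measure (Eucl n)) (Ω : Set (Eucl n))
    (f g u : Eucl n → ℝ) : Prop :=
  MemV ν Ω u ∧ (∀ᵐ x ∂(volume : Measure (Eucl n)), x ∉ Ω → u x = g x) ∧
  ∀ φ : Eucl n → ℝ, MemH ν Ω φ → formB ν u φ = ∫ x in Ω, f x * φ x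

end

/-!
Test the equation with `φ = (u - K)⁺`, `K = C‖f‖∞ + ‖g‖∞`, which vanishes off `Ω`. The identity
`(a - b)(a⁺ - b⁺) = (a⁺ - b⁺)² + a⁺b⁻ + a⁻b⁺` splits `⟨u, φ⟩` into the energy of `φ` and an
interaction term. Since every point of `Ω` sends `ν`-mass at least `C⁻¹` out of `Ω`, where
`K - u ≥ C‖f‖∞`, the interaction term alone dominates `∫ f φ`. So the energy of `φ` vanishes,
and the same mass bound gives `C⁻¹ ∫ φ² ≤ 2 ⟨φ, φ⟩ = 0`.
-/

open Function

lemma sub_mul_posPart_sub_eq (a b K : ℝ) :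
    (a - b) * (max (a - K) 0 - max (b - K) 0) =
      (max (a - K) 0 - max (b - K) 0) ^ 2 + max (a - K) 0 * max (K - b) 0 +
        max (K - a) 0 * max (b - K) 0 := by
  rcases le_total a K with ha | ha <;> rcases le_total b K with hb | hb <;>
    simp only [max_eq_left, max_eq_right, sub_nonneg, sub_nonpos, ha, hb] <;> ring

lemma sub_mul_posPart_sub_nonneg (a b K : ℝ) :
    0 ≤ (a - b) * (max (a - K) 0 - max (b - K) 0) := by
  rw [sub_mul_posPart_sub_eq]
  positivity

lemma abs_posPart_sub_sub_le (a b K : ℝ) :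
    |max (a - K) 0 - max (b - K) 0| ≤ |a - b| := by
  simpa using abs_max_sub_max_le_abs (a - K) (b - K) 0

lemma sub_mul_posPart_sub_le_sq (a b K : ℝ) :
    (a - b) * (max (a - K) 0 - max (b - K) 0) ≤ (a - b) ^ 2 := by
  calc (a - b) * (max (a - K) 0 - max (b - K) 0)
      ≤ |a - b| * |max (a - K) 0 - max (b - K) 0| := by rw [← abs_mul]; exact le_abs_self _
    _ ≤ |a - b| * |a - b| :=
        mul_le_mul_of_nonneg_left (abs_posPart_sub_sub_le a b K) (abs_nonneg _)
    _ = (a - b) ^ 2 := by rw [← abs_mul, ← sq, abs_sq]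

namespace IsSymmLevy

variable {n : ℕ} {ν : Measure (Eucl n)}

lemma measure_setOf_le_norm_lt_top (hν : IsSymmLevy ν) {δ : ℝ} (hδ : 0 < δ) :
    ν {y | δ ≤ ‖y‖} < ⊤ := by
  set f : Eucl n → ℝ≥0∞ := fun y => ENNReal.ofReal (min 1 (‖y‖ ^ 2))
  have hpos : ENNReal.ofReal (min 1 (δ ^ 2)) ≠ 0 := by positivity
  calc ν {y | δ ≤ ‖y‖} ≤ ν {y | ENNReal.ofReal (min 1 (δ ^ 2)) ≤ f y} :=
        measure_mono fun y (hy : δ ≤ ‖y‖) =>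
          ENNReal.ofReal_le_ofReal (min_le_min_left _ (pow_le_pow_left₀ hδ.le hy 2))
    _ ≤ (∫⁻ y, f y ∂ν) / ENNReal.ofReal (min 1 (δ ^ 2)) :=
        meas_ge_le_lintegral_div (by fun_prop) hpos ENNReal.ofReal_ne_top
    _ < ⊤ := ENNReal.div_lt_top hν.2.2.ne hpos

lemma sigmaFinite (hν : IsSymmLevy ν) : SigmaFinite ν := by
  refine Measure.sigmaFinite_of_countable
    (S := insert {0} (range fun k : ℕ => {y | 1 / (k + 1 : ℝ) ≤ ‖y‖}))
    ((countable_range _).insert _) ?_ ?_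
  · rintro s (rfl | ⟨k, rfl⟩)
    · simp [hν.1]
    · exact hν.measure_setOf_le_norm_lt_top (by positivity)
  · refine eq_univ_of_forall fun y => ?_
    rcases eq_or_ne y 0 with rfl | hy
    · exact ⟨{0}, mem_insert _ _, rfl⟩
    · obtain ⟨k, hk⟩ := exists_nat_one_div_lt (norm_pos_iff.2 hy)
      exact ⟨_, mem_insert_of_mem _ ⟨k, rfl⟩, hk.le⟩

lemma isNegInvariant (hν : IsSymmLevy ν) : ν.IsNegInvariant := by
  refine ⟨Measure.ext fun A hA => ?_⟩
  rw [Measure.neg_apply, hν.2.1 A hA]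

/-- Symmetry of `ν` and translation invariance of Lebesgue measure let one exchange the two
points `y` and `y + z` of the double integral. -/
lemma lintegral_lintegral_add_swap (hν : IsSymmLevy ν) {H : Eucl n → Eucl n → ℝ≥0∞}
    (hH : Measurable (uncurry H)) :
    ∫⁻ y, ∫⁻ z, H y (y + z) ∂ν = ∫⁻ y, ∫⁻ z, H (y + z) y ∂ν := by
  have := hν.sigmaFinite
  have := hν.isNegInvariant
  calc ∫⁻ y, ∫⁻ z, H y (y + z) ∂ν
      = ∫⁻ z, ∫⁻ y, H y (y + z) ∂volume ∂ν :=
        lintegral_lintegral_swap (hH.comp (measurable_fst.prodMk measurable_add)).aemeasurable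
    _ = ∫⁻ z, ∫⁻ y, H (y + -z) y ∂volume ∂ν := by
        refine lintegral_congr fun z => ?_
        rw [← lintegral_add_right_eq_self (fun y => H (y + -z) y) z]
        simp
    _ = ∫⁻ z, ∫⁻ y, H (y + z) y ∂volume ∂ν :=
        lintegral_neg_eq_self (fun z => ∫⁻ y, H (y + z) y)
    _ = ∫⁻ y, ∫⁻ z, H (y + z) y ∂ν :=
        (lintegral_lintegral_swap (f := fun y z => H (y + z) y)
          (hH.comp (measurable_add.prodMk measurable_fst)).aemeasurable).symm

end IsSymmLevy

lemma ae_ae_add {G : Type*} [MeasurableSpace G] [AddCommGroup G] [MeasurableAdd₂ G]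
    {μ ν : Measure G} [SFinite μ] [SFinite ν] [μ.IsAddLeftInvariant] {p : G → Prop}
    (h : ∀ᵐ x ∂μ, p x) : ∀ᵐ y ∂μ, ∀ᵐ z ∂ν, p (y + z) := by
  refine Measure.ae_ae_of_ae_prod (p := fun q => p (q.1 + q.2)) ?_
  filter_upwards [(quasiMeasurePreserving_add_swap μ ν).ae h] with q hq
  rwa [add_comm]

lemma lintegral_lintegral_add {α β : Type*} [MeasurableSpace α] [MeasurableSpace β]
    {μ : Measure α} {ν : Measure β} [SFinite ν] {F G : α → β → ℝ≥0∞}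
    (hF : Measurable (uncurry F)) :
    ∫⁻ y, ∫⁻ z, (F y z + G y z) ∂ν ∂μ =
      (∫⁻ y, ∫⁻ z, F y z ∂ν ∂μ) + ∫⁻ y, ∫⁻ z, G y z ∂ν ∂μ := by
  calc _ = ∫⁻ y, ((∫⁻ z, F y z ∂ν) + ∫⁻ z, G y z ∂ν) ∂μ :=
        lintegral_congr fun y => lintegral_add_left (hF.comp measurable_prodMk_left) _
    _ = _ := lintegral_add_left hF.lintegral_prod_right' _

section Forms

variable {n : ℕ} {ν : Measure (Eucl n)}

/-- `formB` with the positive part of its integrand, as an extended nonnegative integral. -/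
noncomputable def lformB (ν : Measure (Eucl n)) (u v : Eucl n → ℝ) : ℝ≥0∞ :=
  (1/2) * ∫⁻ y, ∫⁻ z, ENNReal.ofReal ((u y - u (y + z)) * (v y - v (y + z))) ∂ν

lemma ae_ae_add_eq [SFinite ν] {u u' : Eucl n → ℝ} (h : u =ᵐ[volume] u') :
    ∀ᵐ y, ∀ᵐ z ∂ν, u y = u' y ∧ u (y + z) = u' (y + z) := by
  filter_upwards [h, ae_ae_add (ν := ν) h] with y hy hyz
  exact hyz.mono fun z hz => ⟨hy, hz⟩

lemma formB_congr_ae [SFinite ν] {u u' : Eucl n → ℝ} (h : u =ᵐ[volume] u') (v : Eucl n → ℝ) :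
    formB ν u v = formB ν u' v := by
  unfold formB
  congr 1
  refine integral_congr_ae ?_
  filter_upwards [ae_ae_add_eq (ν := ν) h] with y hy
  refine integral_congr_ae ?_
  filter_upwards [hy] with z hz
  rw [hz.1, hz.2]

lemma sobSq_congr_ae [SFinite ν] {u u' : Eucl n → ℝ} (h : u =ᵐ[volume] u') (D : Set (Eucl n)) :
    sobSq ν D u = sobSq ν D u' := by
  unfold sobSq
  congr 1
  · exact lintegral_congr_ae (ae_restrict_of_ae (h.mono fun x hx => by simp only [hx]))
  · congr 1
    refine lintegral_congr_ae (ae_restrict_of_ae ?_)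
    filter_upwards [ae_ae_add_eq (ν := ν) h] with y hy
    refine lintegral_congr_ae ?_
    filter_upwards [hy] with z hz
    rw [hz.1, hz.2]

lemma formB_eq_toReal_lformB [SFinite ν] {u v : Eucl n → ℝ} (hu : Measurable u)
    (hv : Measurable v) (h0 : ∀ y z, 0 ≤ (u y - u (y + z)) * (v y - v (y + z)))
    (hfin : lformB ν u v ≠ ⊤) : formB ν u v = (lformB ν u v).toReal := by
  have hF : Measurable (uncurry fun y z => (u y - u (y + z)) * (v y - v (y + z))) := by
    fun_prop
  have hinner : Measurable fun y =>
      ∫⁻ z, ENNReal.ofReal ((u y - u (y + z)) * (v y - v (y + z))) ∂ν :=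
    (ENNReal.measurable_ofReal.comp hF).lintegral_prod_right'
  unfold formB lformB
  rw [ENNReal.toReal_mul, ← integral_toReal hinner.aemeasurable]
  · congr 1
    · norm_num
    refine integral_congr_ae (ae_of_all _ fun y => ?_)
    exact integral_eq_lintegral_of_nonneg_ae (ae_of_all _ (h0 y))
      (hF.comp measurable_prodMk_left).aestronglyMeasurable
  · refine ae_lt_top hinner ?_
    unfold lformB at hfin
    simpa [ENNReal.mul_eq_top] using hfin

end Forms

section Energy

variable {n : ℕ} {ν : Measure (Eucl n)} {Ω : Set (Eucl n)}

lemma sobSq_posPart_sub_le {K : ℝ} (hK : 0 ≤ K) (D : Set (Eucl n)) (W : Eucl n → ℝ) :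
    sobSq ν D (fun x => max (W x - K) 0) ≤ sobSq ν D W := by
  unfold sobSq
  refine add_le_add (lintegral_mono fun x => ENNReal.ofReal_le_ofReal ?_)
    (mul_le_mul_right (lintegral_mono fun y => lintegral_mono fun z =>
      ENNReal.ofReal_le_ofReal (sq_le_sq.2 ?_)) _)
  · rw [← sq_abs (W x)]
    exact pow_le_pow_left₀ (le_max_right _ _)
      (max_le (by linarith [le_abs_self (W x)]) (abs_nonneg _)) 2
  · simpa using abs_posPart_sub_sub_le (W y) (W (y + z)) K

lemma lintegral_lintegral_le_two_mul_setLIntegral (hν : IsSymmLevy ν) (hΩ : MeasurableSet Ω)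
    {W : Eucl n → ℝ} (hW : Measurable W) {F : Eucl n → Eucl n → ℝ≥0∞}
    (hF : ∀ y z, F y z ≤ ENNReal.ofReal ((W y - W (y + z)) ^ 2))
    (hF0 : ∀ y z, y ∉ Ω → y + z ∉ Ω → F y z = 0) :
    ∫⁻ y, ∫⁻ z, F y z ∂ν ≤
      2 * ∫⁻ y in Ω, ∫⁻ z, ENNReal.ofReal ((W y - W (y + z)) ^ 2) ∂ν := by
  have := hν.sigmaFinite
  set D : Eucl n → Eucl n → ℝ≥0∞ := fun y w => ENNReal.ofReal ((W y - W w) ^ 2)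
  have hfirst : ∫⁻ y, ∫⁻ z, Ω.indicator 1 y * D y (y + z) ∂ν =
      ∫⁻ y in Ω, ∫⁻ z, D y (y + z) ∂ν := by
    rw [← lintegral_indicator hΩ]
    refine lintegral_congr fun y => ?_
    by_cases hy : y ∈ Ω <;> simp [hy]
  have hsecond : ∫⁻ y, ∫⁻ z, Ω.indicator 1 (y + z) * D y (y + z) ∂ν =
      ∫⁻ y, ∫⁻ z, Ω.indicator 1 y * D y (y + z) ∂ν := by
    rw [hν.lintegral_lintegral_add_swap (H := fun y w => Ω.indicator 1 w * D y w) (by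
      fun_prop)]
    refine lintegral_congr fun y => lintegral_congr fun z => ?_
    simp only [D]
    rw [← neg_sub, neg_sq]
  calc ∫⁻ y, ∫⁻ z, F y z ∂ν
      ≤ ∫⁻ y, ∫⁻ z, (Ω.indicator 1 y * D y (y + z) + Ω.indicator 1 (y + z) * D y (y + z)) ∂ν := by
        gcongr with y z
        by_cases hy : y ∈ Ω
        · simpa [hy] using le_add_right (hF y z)
        by_cases hyz : y + z ∈ Ω
        · simpa [hy, hyz] using hF y z
        · simp [hF0 y z hy hyz]
    _ = 2 * ∫⁻ y in Ω, ∫⁻ z, D y (y + z) ∂ν := by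
        rw [lintegral_lintegral_add (by fun_prop), hsecond, hfirst, two_mul]

lemma lformB_posPart_le_two_mul_sobSq (hν : IsSymmLevy ν) (hΩ : MeasurableSet Ω)
    {W : Eucl n → ℝ} (hW : Measurable W) {K : ℝ} (hWΩ : ∀ x ∉ Ω, W x ≤ K) :
    lformB ν W (fun x => max (W x - K) 0) ≤ 2 * sobSq ν Ω W := by
  have hvanish : ∀ x ∉ Ω, max (W x - K) 0 = 0 := fun x hx => max_eq_right (by linarith [hWΩ x hx])
  have hsob : (1/2) * ∫⁻ y in Ω, ∫⁻ z, ENNReal.ofReal ((W y - W (y + z)) ^ 2) ∂ν ≤ sobSq ν Ω W :=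
    le_add_self
  calc lformB ν W (fun x => max (W x - K) 0)
      ≤ (1/2) * (2 * ∫⁻ y in Ω, ∫⁻ z, ENNReal.ofReal ((W y - W (y + z)) ^ 2) ∂ν) := by
        refine mul_le_mul_right (lintegral_lintegral_le_two_mul_setLIntegral hν hΩ hW
          (fun y z => ENNReal.ofReal_le_ofReal (sub_mul_posPart_sub_le_sq _ _ K)) ?_) _
        intro y z hy hyz
        simp [hvanish y hy, hvanish (y + z) hyz]
    _ = 2 * ((1/2) * ∫⁻ y in Ω, ∫⁻ z, ENNReal.ofReal ((W y - W (y + z)) ^ 2) ∂ν) := by ring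
    _ ≤ 2 * sobSq ν Ω W := mul_le_mul_right hsob _

/-- The pointwise identity `sub_mul_posPart_sub_eq` splits the form into the energy of the
positive part and two interaction terms, which symmetry of `ν` makes equal. -/
lemma lformB_posPart_eq (hν : IsSymmLevy ν) {W : Eucl n → ℝ} (hW : Measurable W) (K : ℝ) :
    lformB ν W (fun x => max (W x - K) 0) = formQ ν (fun x => max (W x - K) 0) +
      ∫⁻ y, ∫⁻ z, ENNReal.ofReal (max (W y - K) 0 * max (K - W (y + z)) 0) ∂ν := by
  have := hν.sigmaFinite
  set X := ∫⁻ y, ∫⁻ z, ENNReal.ofReal (max (W y - K) 0 * max (K - W (y + z)) 0) ∂ν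
  have hswap : ∫⁻ y, ∫⁻ z, ENNReal.ofReal (max (K - W y) 0 * max (W (y + z) - K) 0) ∂ν = X := by
    rw [hν.lintegral_lintegral_add_swap
      (H := fun y w => ENNReal.ofReal (max (K - W y) 0 * max (W w - K) 0)) (by fun_prop)]
    simp only [X, mul_comm]
  have hsplit : ∀ y z, ENNReal.ofReal ((W y - W (y + z)) *
      (max (W y - K) 0 - max (W (y + z) - K) 0)) =
      ENNReal.ofReal ((max (W y - K) 0 - max (W (y + z) - K) 0) ^ 2) +
        ENNReal.ofReal (max (W y - K) 0 * max (K - W (y + z)) 0) +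
        ENNReal.ofReal (max (K - W y) 0 * max (W (y + z) - K) 0) := by
    intro y z
    rw [sub_mul_posPart_sub_eq, ENNReal.ofReal_add (by positivity) (by positivity),
      ENNReal.ofReal_add (by positivity) (by positivity)]
  unfold lformB formQ
  simp_rw [hsplit]
  rw [lintegral_lintegral_add (by fun_prop), lintegral_lintegral_add (by fun_prop), hswap,
    add_assoc, ← two_mul, mul_add, ← mul_assoc, one_div,
    ENNReal.inv_mul_cancel two_ne_zero ENNReal.ofNat_ne_top, one_mul]

variable {c : ℝ≥0∞}

lemma measurableSet_add_notMem (hΩ : MeasurableSet Ω) (y : Eucl n) :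
    MeasurableSet {z | y + z ∉ Ω} :=
  measurable_const_add y hΩ.compl

lemma ofReal_mul_setLIntegral_le (hΩ : MeasurableSet Ω)
    (hcΩ : ∀ y ∈ Ω, c ≤ ν {z | y + z ∉ Ω}) {φ ψ : Eucl n → ℝ} {κ : ℝ} (hφ : ∀ x, 0 ≤ φ x)
    (hψΩ : ∀ x ∉ Ω, κ ≤ ψ x) :
    ENNReal.ofReal κ * c * ∫⁻ y in Ω, ENNReal.ofReal (φ y) ≤
      ∫⁻ y, ∫⁻ z, ENNReal.ofReal (φ y * ψ (y + z)) ∂ν := by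
  calc ENNReal.ofReal κ * c * ∫⁻ y in Ω, ENNReal.ofReal (φ y)
      ≤ ∫⁻ y in Ω, ENNReal.ofReal κ * c * ENNReal.ofReal (φ y) := lintegral_const_mul_le _ _
    _ ≤ ∫⁻ y in Ω, ∫⁻ z, ENNReal.ofReal (φ y * ψ (y + z)) ∂ν := by
        refine setLIntegral_mono' hΩ fun y hy => ?_
        calc ENNReal.ofReal κ * c * ENNReal.ofReal (φ y)
            ≤ ENNReal.ofReal κ * ν {z | y + z ∉ Ω} * ENNReal.ofReal (φ y) := by
              gcongr; exact hcΩ y hy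
          _ = ∫⁻ z in {z | y + z ∉ Ω}, ENNReal.ofReal (φ y * κ) ∂ν := by
              rw [setLIntegral_const, ENNReal.ofReal_mul (hφ y)]; ring
          _ ≤ ∫⁻ z in {z | y + z ∉ Ω}, ENNReal.ofReal (φ y * ψ (y + z)) ∂ν :=
              setLIntegral_mono' (measurableSet_add_notMem hΩ y) fun z hz =>
                ENNReal.ofReal_le_ofReal (mul_le_mul_of_nonneg_left (hψΩ _ hz) (hφ y))
          _ ≤ _ := setLIntegral_le_lintegral _ _
    _ ≤ _ := setLIntegral_le_lintegral _ _

lemma mul_lintegral_sq_le_two_mul_formQ (hΩ : MeasurableSet Ω)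
    (hcΩ : ∀ y ∈ Ω, c ≤ ν {z | y + z ∉ Ω}) {φ : Eucl n → ℝ} (hφΩ : ∀ x ∉ Ω, φ x = 0) :
    c * ∫⁻ y, ENNReal.ofReal (φ y ^ 2) ≤ 2 * formQ ν φ := by
  unfold formQ
  rw [← mul_assoc, one_div, ENNReal.mul_inv_cancel two_ne_zero ENNReal.ofNat_ne_top, one_mul]
  refine (lintegral_const_mul_le _ _).trans (lintegral_mono fun y => ?_)
  by_cases hy : y ∈ Ω
  · calc c * ENNReal.ofReal (φ y ^ 2) ≤ ν {z | y + z ∉ Ω} * ENNReal.ofReal (φ y ^ 2) := by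
          gcongr; exact hcΩ y hy
      _ = ∫⁻ z in {z | y + z ∉ Ω}, ENNReal.ofReal (φ y ^ 2) ∂ν := by
          rw [setLIntegral_const, mul_comm]
      _ = ∫⁻ z in {z | y + z ∉ Ω}, ENNReal.ofReal ((φ y - φ (y + z)) ^ 2) ∂ν :=
          setLIntegral_congr_fun (measurableSet_add_notMem hΩ y)
            fun z hz => by simp only [hφΩ _ hz, sub_zero]
      _ ≤ _ := setLIntegral_le_lintegral _ _
  · simp [hφΩ y hy]

lemma ofReal_integral_mul_le {α : Type*} [MeasurableSpace α] {μ : Measure α} {f φ : α → ℝ}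
    {M : ℝ} (hf : ∀ᵐ x ∂μ, ‖f x‖ ≤ M) (hφ : ∀ x, 0 ≤ φ x) :
    ENNReal.ofReal (∫ x, f x * φ x ∂μ) ≤ ENNReal.ofReal M * ∫⁻ x, ENNReal.ofReal (φ x) ∂μ := by
  calc ENNReal.ofReal (∫ x, f x * φ x ∂μ) ≤ ‖∫ x, f x * φ x ∂μ‖ₑ := Real.ofReal_le_enorm _
    _ ≤ ∫⁻ x, ‖f x * φ x‖ₑ ∂μ := enorm_integral_le_lintegral_enorm _
    _ ≤ ∫⁻ x, ENNReal.ofReal M * ENNReal.ofReal (φ x) ∂μ := by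
        refine lintegral_mono_ae (hf.mono fun x hx => ?_)
        rw [Real.enorm_eq_ofReal_abs, ← ENNReal.ofReal_mul' (hφ x), abs_mul, abs_of_nonneg (hφ x)]
        exact ENNReal.ofReal_le_ofReal (mul_le_mul_of_nonneg_right hx (hφ x))
    _ = ENNReal.ofReal M * ∫⁻ x, ENNReal.ofReal (φ x) ∂μ :=
        lintegral_const_mul' _ _ ENNReal.ofReal_ne_top

lemma ae_le_of_lformB_posPart_le (hν : IsSymmLevy ν) (hΩ : MeasurableSet Ω) (hc : c ≠ 0)
    (hcΩ : ∀ y ∈ Ω, c ≤ ν {z | y + z ∉ Ω}) {W : Eucl n → ℝ} (hW : Measurable W) {K κ : ℝ}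
    (hκ : 0 ≤ κ) (hWΩ : ∀ x ∉ Ω, W x ≤ K - κ)
    (hfin : lformB ν W (fun x => max (W x - K) 0) ≠ ⊤)
    (hle : lformB ν W (fun x => max (W x - K) 0) ≤
      ENNReal.ofReal κ * c * ∫⁻ y in Ω, ENNReal.ofReal (max (W y - K) 0)) :
    ∀ᵐ x, W x ≤ K := by
  set φ : Eucl n → ℝ := fun x => max (W x - K) 0
  have hφΩ : ∀ x ∉ Ω, φ x = 0 := fun x hx => max_eq_right (by linarith [hWΩ x hx])
  have hdecomp := lformB_posPart_eq hν hW K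
  set X := ∫⁻ y, ∫⁻ z, ENNReal.ofReal (max (W y - K) 0 * max (K - W (y + z)) 0) ∂ν
  have hX : ENNReal.ofReal κ * c * ∫⁻ y in Ω, ENNReal.ofReal (φ y) ≤ X :=
    ofReal_mul_setLIntegral_le (φ := φ) (ψ := fun x => max (K - W x) 0) hΩ hcΩ
      (fun x => le_max_right _ _)
      fun x hx => le_max_of_le_left (by linarith [hWΩ x hx])
  have hXfin : X ≠ ⊤ := ne_top_of_le_ne_top hfin (hdecomp ▸ le_add_self)
  have hQ : formQ ν φ = 0 := by
    refine nonpos_iff_eq_zero.1 (ENNReal.le_of_add_le_add_right hXfin ?_)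
    rw [zero_add, ← hdecomp]
    exact hle.trans hX
  have hsq : ∫⁻ y, ENNReal.ofReal (φ y ^ 2) = 0 := by
    have := mul_lintegral_sq_le_two_mul_formQ hΩ hcΩ hφΩ
    rw [hQ, mul_zero, nonpos_iff_eq_zero, mul_eq_zero] at this
    exact this.resolve_left hc
  filter_upwards [(lintegral_eq_zero_iff (by fun_prop)).1 hsq] with x hx
  have hx : φ x ^ 2 ≤ 0 := ENNReal.ofReal_eq_zero.1 hx
  nlinarith [le_max_left (W x - K) 0, le_max_right (W x - K) 0]

end Energy

/-- The solution is compared with its truncation `W`, equal to `u` a.e. but bounded by the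
boundary bound everywhere off `Ω`, so that the test function `(W - K)⁺` vanishes identically
off `Ω`. -/
lemma IsWeakSol.ae_le_add {n : ℕ} {ν : Measure (Eucl n)} {Ω : Set (Eucl n)}
    {f g u : Eucl n → ℝ} {c : ℝ≥0∞} {κ G : ℝ} (hu : IsWeakSol ν Ω f g u) (hν : IsSymmLevy ν)
    (hΩ : MeasurableSet Ω) (hc0 : c ≠ 0) (hc : c ≠ ⊤) (hcΩ : ∀ y ∈ Ω, c ≤ ν {z | y + z ∉ Ω})
    (hκ : 0 ≤ κ) (hG : 0 ≤ G) (hf : ∀ᵐ x ∂volume.restrict Ω, ‖f x‖ ≤ κ * c.toReal)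
    (hg : ∀ᵐ x ∂volume.restrict Ωᶜ, g x ≤ G) :
    ∀ᵐ x, u x ≤ κ + G := by
  have := hν.sigmaFinite
  obtain ⟨⟨hum, husob⟩, hug, hweak⟩ := hu
  set K := κ + G
  set W : Eucl n → ℝ := fun x => if x ∈ Ω then u x else min (u x) G
  have hWm : Measurable W := hum.ite hΩ (hum.min measurable_const)
  have hWΩ : ∀ x ∉ Ω, W x ≤ K - κ := fun x hx => by simp [W, hx, K]
  have huW : u =ᵐ[volume] W := by
    filter_upwards [hug, (ae_restrict_iff' hΩ.compl).1 hg] with x hux hgx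
    by_cases hx : x ∈ Ω
    · simp [W, hx]
    · simp [W, hx, hux hx, hgx hx]
  have hsobW : sobSq ν Ω W < ⊤ := by rwa [← sobSq_congr_ae huW Ω]
  set φ : Eucl n → ℝ := fun x => max (W x - K) 0
  have hφm : Measurable φ := by fun_prop
  have hφH : MemH ν Ω φ := by
    refine ⟨⟨hφm, ?_⟩, ae_of_all _ fun x hx => max_eq_right (by linarith [hWΩ x hx])⟩
    exact (sobSq_posPart_sub_le (by positivity) Ω W).trans_lt hsobW
  have hfin : lformB ν W φ ≠ ⊤ := by
    refine ne_top_of_le_ne_top ?_ (lformB_posPart_le_two_mul_sobSq hν hΩ hWm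
      fun x hx => (hWΩ x hx).trans (by linarith))
    exact ENNReal.mul_ne_top ENNReal.ofNat_ne_top hsobW.ne
  have hform : ∫ x in Ω, f x * φ x = (lformB ν W φ).toReal := by
    rw [← hweak φ hφH, formB_congr_ae huW,
      formB_eq_toReal_lformB hWm hφm (fun y z => sub_mul_posPart_sub_nonneg _ _ _) hfin]
  have hle : lformB ν W φ ≤ ENNReal.ofReal κ * c * ∫⁻ y in Ω, ENNReal.ofReal (φ y) := by
    rw [← ENNReal.ofReal_toReal hfin, ← hform, mul_assoc]
    refine (ofReal_integral_mul_le hf fun x => le_max_right _ _).trans_eq ?_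
    rw [ENNReal.ofReal_mul hκ, ENNReal.ofReal_toReal hc, mul_assoc]
  filter_upwards [huW, ae_le_of_lformB_posPart_le hν hΩ hc0 hcΩ hWm hκ hWΩ hfin hle]
    with x hux hWx using hux ▸ hWx

section FarMass

variable {n : ℕ} {ν : Measure (Eucl n)} {Ω : Set (Eucl n)}

/-- The constant `C⁻¹` of the statement; the limit `ε → 0⁺` of the monotone family is its
supremum. -/
noncomputable def farMass (ν : Measure (Eucl n)) (Ω : Set (Eucl n)) : ℝ≥0∞ :=
  ⨆ ε ∈ Ioi (0:ℝ), ⨅ x ∈ Ω, ν {z | z + x ∉ Metric.thickening ε Ω}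

lemma farMass_le_measure {x : Eucl n} (hx : x ∈ Ω) : farMass ν Ω ≤ ν {z | x + z ∉ Ω} :=
  iSup₂_le fun _ hε => (iInf₂_le x hx).trans <| measure_mono fun z hz hxz =>
    hz (Metric.self_subset_thickening hε Ω (by rwa [add_comm] at hxz))

lemma farMass_pos (hsupp : ∀ R : ℝ, 0 < R → 0 < ν {y : Eucl n | R < ‖y‖})
    (hΩb : Bornology.IsBounded Ω) : 0 < farMass ν Ω := by
  obtain ⟨R, hR, hΩR⟩ := hΩb.subset_closedBall_lt 0 0
  refine (hsupp (2 * R + 1) (by linarith)).trans_le (le_trans ?_ (le_iSup₂ (f := fun ε _ =>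
    ⨅ x ∈ Ω, ν {z | z + x ∉ Metric.thickening ε Ω}) (1 : ℝ) (mem_Ioi.2 one_pos)))
  refine le_iInf₂ fun x hx => measure_mono fun z (hz : 2 * R + 1 < ‖z‖) hzx => ?_
  obtain ⟨w, hw, hzxw⟩ := Metric.mem_thickening_iff.1 hzx
  have hxR : ‖x‖ ≤ R := by simpa using hΩR hx
  have hwR : ‖w‖ ≤ R := by simpa using hΩR hw
  have : ‖z‖ ≤ dist (z + x) w + ‖w‖ + ‖x‖ := by
    rw [dist_eq_norm]
    calc ‖z‖ = ‖(z + x - w) + w - x‖ := by congr 1; abel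
      _ ≤ _ := (norm_sub_le _ _).trans (by gcongr; exact norm_add_le _ _)
  linarith

lemma farMass_lt_top (hν : IsSymmLevy ν) (hΩo : IsOpen Ω) (hΩne : Ω.Nonempty) :
    farMass ν Ω < ⊤ := by
  obtain ⟨x, hx⟩ := hΩne
  obtain ⟨δ, hδ, hball⟩ := Metric.isOpen_iff.1 hΩo x hx
  refine (farMass_le_measure hx).trans_lt
    ((measure_mono fun z hz => ?_).trans_lt (hν.measure_setOf_le_norm_lt_top hδ))
  by_contra hzδ
  exact hz (hball (by simpa [dist_eq_norm] using not_le.1 hzδ))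

end FarMass

theorem dirichlet_stmt19 {n : ℕ} (ν : Measure (Eucl n)) (hν : IsSymmLevy ν)
    (hsupp : ∀ R : ℝ, 0 < R → 0 < ν {y : Eucl n | R < ‖y‖})
    (Ω : Set (Eucl n)) (hΩo : IsOpen Ω) (hΩne : Ω.Nonempty)
    (hΩb : Bornology.IsBounded Ω) :
    0 < (⨆ ε ∈ Set.Ioi (0:ℝ), ⨅ x ∈ Ω,
          ν {z : Eucl n | z + x ∉ Metric.thickening ε Ω}) ∧
    ∀ f g u : Eucl n → ℝ,
      MemLp f ⊤ ((volume : Measure (Eucl n)).restrict Ω) →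
      MemLp g ⊤ ((volume : Measure (Eucl n)).restrict Ωᶜ) →
      IsWeakSol ν Ω f g u →
      ∀ᵐ x ∂(volume : Measure (Eucl n)),
        ENNReal.ofReal (u x) ≤
          (⨆ ε ∈ Set.Ioi (0:ℝ), ⨅ x' ∈ Ω,
              ν {z : Eucl n | z + x' ∉ Metric.thickening ε Ω})⁻¹ *
            eLpNorm f ⊤ ((volume : Measure (Eucl n)).restrict Ω) +
          eLpNorm g ⊤ ((volume : Measure (Eucl n)).restrict Ωᶜ) := by
  have hc0 : 0 < farMass ν Ω := farMass_pos hsupp hΩb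
  have hc : farMass ν Ω ≠ ⊤ := (farMass_lt_top hν hΩo hΩne).ne
  refine ⟨hc0, fun f g u hf hg hu => ?_⟩
  change ∀ᵐ x, ENNReal.ofReal (u x) ≤ (farMass ν Ω)⁻¹ * _ + _
  set c := farMass ν Ω
  set Nf := eLpNorm f ⊤ (volume.restrict Ω)
  set Ng := eLpNorm g ⊤ (volume.restrict Ωᶜ)
  have hκ : c⁻¹ * Nf ≠ ⊤ := ENNReal.mul_ne_top (ENNReal.inv_ne_top.2 hc0.ne') hf.2.ne
  have hG : Ng ≠ ⊤ := hg.2.ne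
  have hf' : ∀ᵐ x ∂volume.restrict Ω, ‖f x‖ ≤ (c⁻¹ * Nf).toReal * c.toReal := by
    rw [← ENNReal.toReal_mul, mul_comm, ← mul_assoc, ENNReal.mul_inv_cancel hc0.ne' hc, one_mul,
      toReal_eLpNorm hf.1]
    exact ae_le_lpNorm_exponent_top hf
  have hg' : ∀ᵐ x ∂volume.restrict Ωᶜ, g x ≤ Ng.toReal := by
    filter_upwards [ae_le_lpNorm_exponent_top hg] with x hx
    exact (Real.le_norm_self _).trans (by rwa [toReal_eLpNorm hg.1])
  filter_upwards [hu.ae_le_add hν hΩo.measurableSet hc0.ne' hc (fun y hy => farMass_le_measure hy)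
    ENNReal.toReal_nonneg ENNReal.toReal_nonneg hf' hg'] with x hx
  rw [← ENNReal.ofReal_toReal hκ, ← ENNReal.ofReal_toReal hG,
    ← ENNReal.ofReal_add ENNReal.toReal_nonneg ENNReal.toReal_nonneg]
  exact ENNReal.ofReal_le_ofReal hx
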